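/- The function y(x) = 2^{1/4}·√(x(1−x)) satisfies the autonomous ODE y''(x) + (1/2)·y(x)^{−3} = 0 for all x ∈ (0,1), together with the boundary conditions y(0) = y(1) = 0. -/

import Mathlib

/-!
Write `y = c √u` with `c = 2^{1/4}` and `u = x(1-x)`. Since `u'' = -2` and `(u')² + 4u = 1`,
`(√u)'' = (2uu'' - u'²) / (4u^{3/2}) = -1 / (4u^{3/2})`, so `y'' = -c / (4u^{3/2})`, while
`y^{-3} / 2 = 1 / (2c³u^{3/2})`; the two cancel exactly because `c⁴ = 2`.
-/

noncomputable def yHalf (x : ℝ) : ℝ := (2 : ℝ) ^ ((1 : ℝ) / 4) * Real.sqrt (x * (1 - x))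

open Real Set Topology

lemma hasDerivAt_sqrt_mul_one_sub {x : ℝ} (hx : x ∈ Ioo (0 : ℝ) 1) :
    HasDerivAt (fun t => √(t * (1 - t))) ((1 - 2 * x) / (2 * √(x * (1 - x)))) x := by
  have hu : HasDerivAt (fun t : ℝ => t * (1 - t)) (1 - 2 * x) x :=
    ((hasDerivAt_id' x).fun_mul ((hasDerivAt_const x (1 : ℝ)).fun_sub (hasDerivAt_id' x))).congr_deriv
      (by ring)
  exact hu.sqrt (mul_pos hx.1 (sub_pos.2 hx.2)).ne'

lemma deriv_deriv_sqrt_mul_one_sub {x : ℝ} (hx : x ∈ Ioo (0 : ℝ) 1) :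
    deriv (deriv fun t => √(t * (1 - t))) x = -1 / (4 * √(x * (1 - x)) ^ 3) := by
  have hu : 0 < x * (1 - x) := mul_pos hx.1 (sub_pos.2 hx.2)
  have hs : 0 < √(x * (1 - x)) := sqrt_pos.2 hu
  have hderiv : deriv (fun t => √(t * (1 - t))) =ᶠ[𝓝 x]
      fun t => (1 - 2 * t) / (2 * √(t * (1 - t))) := by
    filter_upwards [isOpen_Ioo.mem_nhds hx] with t ht
    exact (hasDerivAt_sqrt_mul_one_sub ht).deriv
  have hnum : HasDerivAt (fun t : ℝ => 1 - 2 * t) (-2) x := by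
    simpa using ((hasDerivAt_id x).const_mul 2).const_sub 1
  have hquot := hnum.fun_div ((hasDerivAt_sqrt_mul_one_sub hx).const_mul 2) (by positivity)
  rw [hderiv.deriv_eq, hquot.deriv]
  field_simp
  linear_combination (-16) * sq_sqrt hu.le

lemma two_rpow_one_div_four_pow_four : ((2 : ℝ) ^ ((1 : ℝ) / 4)) ^ 4 = 2 := by
  rw [one_div]
  exact_mod_cast rpow_inv_natCast_pow (by norm_num : (0 : ℝ) ≤ 2) (by norm_num : (4 : ℕ) ≠ 0)

theorem ode_p_half :
    (∀ x ∈ Set.Ioo (0 : ℝ) 1,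
      deriv (deriv yHalf) x + (1 / 2) * (yHalf x) ^ (-3 : ℤ) = 0) ∧
    yHalf 0 = 0 ∧ yHalf 1 = 0 := by
  refine ⟨fun x hx => ?_, by simp [yHalf], by simp [yHalf]⟩
  set c : ℝ := (2 : ℝ) ^ ((1 : ℝ) / 4)
  have hc : 0 < c := by positivity
  have hs : 0 < √(x * (1 - x)) := sqrt_pos.2 (mul_pos hx.1 (sub_pos.2 hx.2))
  have hy'' : deriv (deriv yHalf) x = c * deriv (deriv fun t => √(t * (1 - t))) x := by
    change deriv (deriv fun t => c * √(t * (1 - t))) x = _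
    rw [deriv_const_mul_field', deriv_const_mul_field']
  rw [hy'', deriv_deriv_sqrt_mul_one_sub hx, yHalf, zpow_neg, zpow_ofNat]
  field_simp
  linear_combination (-2) * two_rpow_one_div_four_pow_four
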